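/- arXiv:2205.12913 — 5 statements merged into one kernel-verified Lean document; each statement's English description precedes it below -/
import Mathlib

section
/- Let f be a chief factor function. Then the class C(f) is a formation; that is: (i) if G is a finite group with G ∈ C(f) and N is a normal subgroup of G, then G/N ∈ C(f); and (ii) if G is a finite group with normal subgroups N and M such that N ∩ M = 1, G/N ∈ C(f) and G/M ∈ C(f), then G ∈ C(f). -/
/-! Common definitions: chief factors, G-isomorphism of chief factors, chief factor
functions, the class `C(f)`, classes of finite groups, formations, residuals,
relative centralizers, internal direct products, minimal normal subgroups,
(K-)𝔉-subnormality. -/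

/-- Conjugate of an element of a normal subgroup, as an element of the subgroup. -/
def normalConj {G : Type} [Group G] {H : Subgroup G} (hH : H.Normal) (g : G) (x : ↥H) : ↥H :=
  ⟨g * ↑x * g⁻¹, hH.conj_mem ↑x x.2 g⟩

/-- `H/K` is a chief factor of `G`: both are normal in `G`, `K < H`, and no normal
subgroup of `G` lies strictly between them. -/
def IsChiefFactor (G : Type) [Group G] (H K : Subgroup G) : Prop :=
  H.Normal ∧ K.Normal ∧ K < H ∧
    ∀ L : Subgroup G, L.Normal → K < L → L < H → False

/-- The factors `H/K` and `M/N` are `G`-isomorphic (auxiliary version taking normality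
proofs): there is a group isomorphism `φ : H/K ≃* M/N` commuting with the conjugation
action of `G` on both factors. -/
def GIsoAux (G : Type) [Group G] (H K M N : Subgroup G)
    (hH : H.Normal) (hK : K.Normal) (hM : M.Normal) (hN : N.Normal) : Prop :=
  haveI := hK.subgroupOf H
  haveI := hN.subgroupOf M
  ∃ φ : (↥H ⧸ K.subgroupOf H) ≃* (↥M ⧸ N.subgroupOf M),
    ∀ (g : G) (x : ↥H) (y : ↥M),
      φ (QuotientGroup.mk x) = QuotientGroup.mk y →
        φ (QuotientGroup.mk (normalConj hH g x)) = QuotientGroup.mk (normalConj hM g y)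

/-- The factors `H/K` and `M/N` are `G`-isomorphic. -/
def IsGIsomorphicFactors (G : Type) [Group G] (H K M N : Subgroup G) : Prop :=
  ∃ (hH : H.Normal) (hK : K.Normal) (hM : M.Normal) (hN : N.Normal),
    GIsoAux G H K M N hH hK hM hN

/-- The type of functions assigning a Boolean value (`true` = 1, `false` = 0) to each
finite group `G` and pair of subgroups `H`, `K` (thought of as the factor `H/K`). -/
abbrev ChiefFactorFun : Type 1 :=
  ∀ (G : Type) [Group G] [Finite G], Subgroup G → Subgroup G → Bool

/-- `f` is a chief factor function: it is invariant under `G`-isomorphism of chief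
factors and compatible with quotients. -/
structure IsChiefFactorFun (f : ChiefFactorFun) : Prop where
  iso_inv : ∀ (G : Type) [Group G] [Finite G] (H K M N : Subgroup G),
    IsChiefFactor G H K → IsChiefFactor G M N → IsGIsomorphicFactors G H K M N →
      f G H K = f G M N
  quot_inv : ∀ (G : Type) [Group G] [Finite G] (H K N : Subgroup G) [N.Normal],
    IsChiefFactor G H K → N ≤ K →
      f G H K = f (G ⧸ N) (H.map (QuotientGroup.mk' N)) (K.map (QuotientGroup.mk' N))

/-- `G ∈ C(f)`: every chief factor of `G` has value 1 under `f`. -/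
def CClass (f : ChiefFactorFun) (G : Type) [Group G] [Finite G] : Prop :=
  ∀ H K : Subgroup G, IsChiefFactor G H K → f G H K = true

/-- `G/L ∈ C(f)`, for a normal subgroup `L` of `G`. -/
def CClassQuot (f : ChiefFactorFun) (G : Type) [Group G] [Finite G]
    (L : Subgroup G) (hL : L.Normal) : Prop :=
  haveI := hL
  CClass f (G ⧸ L)

open scoped commutatorElement

/-- The centralizer `C_G(H/K) = {g : G | [g,h] ∈ K for all h ∈ H}` of the factor
`H/K` in `G` (for `K` normal in `G`). -/
def relCentralizer {G : Type} [Group G] (H K : Subgroup G) (hK : K.Normal) : Subgroup G where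
  carrier := {g : G | ∀ x ∈ H, ⁅g, x⁆ ∈ K}
  one_mem' := by
    intro x hx
    have h1 : ⁅(1 : G), x⁆ = 1 := by group
    rw [h1]; exact K.one_mem
  mul_mem' := by
    intro a b ha hb x hx
    have h1 : ⁅a * b, x⁆ = a * ⁅b, x⁆ * a⁻¹ * ⁅a, x⁆ := by group
    rw [h1]
    exact K.mul_mem (hK.conj_mem _ (hb x hx) a) (ha x hx)
  inv_mem' := by
    intro a ha x hx
    have h1 : ⁅a⁻¹, x⁆ = a⁻¹ * ⁅a, x⁆⁻¹ * a⁻¹⁻¹ := by group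
    rw [h1]
    exact hK.conj_mem _ (K.inv_mem (ha x hx)) a⁻¹

/-- A class of finite groups, given as a predicate on finite group types. -/
abbrev GroupClass : Type 1 := ∀ (G : Type) [Group G] [Finite G], Prop

/-- The class `𝔛` is non-empty. -/
def GroupClassNonempty (𝔛 : GroupClass) : Prop :=
  ∃ (G : Type) (g : Group G) (f : Finite G), @𝔛 G g f

/-- `G/L ∈ 𝔛`, for a normal subgroup `L` of `G`. -/
def QuotientIn (𝔛 : GroupClass) (G : Type) [Group G] [Finite G]
    (L : Subgroup G) (hL : L.Normal) : Prop :=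
  haveI := hL
  𝔛 (G ⧸ L)

/-- `𝔛` is a formation: a class of finite groups (closed under isomorphism) which is
closed under taking quotients and under subdirect products. -/
structure IsFormation (𝔛 : GroupClass) : Prop where
  iso_closed : ∀ (G : Type) [Group G] [Finite G] (H : Type) [Group H] [Finite H],
    (G ≃* H) → 𝔛 G → 𝔛 H
  quot_closed : ∀ (G : Type) [Group G] [Finite G] (N : Subgroup G) [N.Normal],
    𝔛 G → 𝔛 (G ⧸ N)
  subdirect_closed : ∀ (G : Type) [Group G] [Finite G] (N M : Subgroup G)
    [N.Normal] [M.Normal], N ⊓ M = ⊥ → 𝔛 (G ⧸ N) → 𝔛 (G ⧸ M) → 𝔛 G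

/-- `𝔛` is hereditary: closed under taking subgroups. -/
def IsHereditary (𝔛 : GroupClass) : Prop :=
  ∀ (G : Type) [Group G] [Finite G], 𝔛 G → ∀ H : Subgroup G, 𝔛 ↥H

/-- `R` is the `𝔛`-residual of `G`: the smallest normal subgroup of `G` whose
quotient lies in `𝔛`. -/
def IsResidual (𝔛 : GroupClass) (G : Type) [Group G] [Finite G] (R : Subgroup G) : Prop :=
  ∃ hR : R.Normal, QuotientIn 𝔛 G R hR ∧
    ∀ (L : Subgroup G) (hL : L.Normal), QuotientIn 𝔛 G L hL → R ≤ L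

/-- `A` is the internal direct product of the family of subgroups `B i`: each `B i`
is a subgroup of `A` normal in `A`, together they generate `A`, and each of them
intersects the subgroup generated by the others trivially. -/
def IsInternalDirectProduct {G : Type} [Group G] (A : Subgroup G)
    {ι : Type} (B : ι → Subgroup G) : Prop :=
  (∀ i, B i ≤ A) ∧ (∀ i, ((B i).subgroupOf A).Normal) ∧ (⨆ i, B i) = A ∧
    ∀ i, B i ⊓ (⨆ (j) (_ : j ≠ i), B j) = ⊥

/-- A non-abelian simple group. -/
def IsNonabelianSimple (S : Type) [Group S] : Prop :=
  IsSimpleGroup S ∧ ∃ x y : S, x * y ≠ y * x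

/-- `A` is a minimal normal subgroup of `G`. -/
def IsMinimalNormal {G : Type} [Group G] (A : Subgroup G) : Prop :=
  A.Normal ∧ A ≠ ⊥ ∧ ∀ B : Subgroup G, B.Normal → B ≤ A → B ≠ ⊥ → B = A

/-- `H` is a subnormal subgroup of `G`. -/
def IsSubnormal (G : Type) [Group G] (H : Subgroup G) : Prop :=
  ∃ (n : ℕ) (c : ℕ → Subgroup G), c 0 = H ∧ c n = ⊤ ∧
    ∀ i < n, c i ≤ c (i + 1) ∧ ((c i).subgroupOf (c (i + 1))).Normal

/-- One step in a K-`𝔉`-subnormal chain: `A ≤ B`, and either `A` is normal in `B` or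
`B / Core_B(A) ∈ 𝔉`. -/
def KFStep (𝔛 : GroupClass) {G : Type} [Group G] [Finite G] (A B : Subgroup G) : Prop :=
  A ≤ B ∧ ((A.subgroupOf B).Normal ∨ 𝔛 (↥B ⧸ (A.subgroupOf B).normalCore))

/-- `H` is a K-`𝔉`-subnormal subgroup of `G`. -/
def IsKFSubnormal (𝔛 : GroupClass) (G : Type) [Group G] [Finite G] (H : Subgroup G) : Prop :=
  ∃ (n : ℕ) (c : ℕ → Subgroup G), c 0 = H ∧ c n = ⊤ ∧
    ∀ i < n, KFStep 𝔛 (c i) (c (i + 1))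

/-- One step in an `𝔉`-subnormal chain (for hereditary `𝔉`): `A < B` and
`B / Core_B(A) ∈ 𝔉`. -/
def FStep (𝔛 : GroupClass) {G : Type} [Group G] [Finite G] (A B : Subgroup G) : Prop :=
  A < B ∧ 𝔛 (↥B ⧸ (A.subgroupOf B).normalCore)

/-- `H` is an `𝔉`-subnormal subgroup of `G` (for hereditary `𝔉`). -/
def IsFSubnormal (𝔛 : GroupClass) (G : Type) [Group G] [Finite G] (H : Subgroup G) : Prop :=
  H = ⊤ ∨ ∃ (n : ℕ) (c : ℕ → Subgroup G), c 0 = H ∧ c n = ⊤ ∧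
    ∀ i < n, FStep 𝔛 (c i) (c (i + 1))

/-! The quotient case is the correspondence theorem: a chief factor of `G/N` is the image of a
chief factor of `G` above `N`, and `f` takes the same value on both.

For the subdirect case let `H/K` be a chief factor of `G`. If `H ∩ N ≤ K`, then by Dedekind's
law `H ∩ KN = K`, so by the second isomorphism theorem `H/K` is `G`-isomorphic to the chief
factor `HN/KN` of `G` above `N`, which comes from `G/N`. Otherwise `H = K(H ∩ N)`, so `H/K` is
`G`-isomorphic to `(H ∩ N)/(H ∩ N ∩ K)`; as `(H ∩ N) ∩ M = 1`, the first case applies to this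
factor with `M` in place of `N`. -/

open Subgroup QuotientGroup
open scoped Pointwise

section ChiefFactor

variable {G : Type} [Group G]

theorem Subgroup.sup_inf_assoc_of_le {A C : Subgroup G} (B : Subgroup G) [B.Normal] (h : A ≤ C) :
    A ⊔ (B ⊓ C) = (A ⊔ B) ⊓ C := by
  refine le_antisymm (sup_le (le_inf le_sup_left h) (inf_le_inf_right C le_sup_right)) ?_
  intro x hx
  have hx' : x ∈ (A : Set G) * ↑(B ⊓ C) := by
    rw [mul_inf_assoc A B C h, ← mul_normal]
    exact hx
  obtain ⟨a, ha, b, hb, rfl⟩ := hx'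
  exact mul_mem (mem_sup_left ha) (mem_sup_right hb)

theorem isChiefFactor_comap_iff {Q : Type} [Group Q] {φ : G →* Q} (hφ : Function.Surjective φ)
    {H K : Subgroup Q} :
    IsChiefFactor G (H.comap φ) (K.comap φ) ↔ IsChiefFactor Q H K := by
  have hnormal : ∀ L : Subgroup Q, (L.comap φ).Normal ↔ L.Normal := fun L =>
    ⟨fun h => map_comap_eq_self_of_surjective hφ L ▸ h.map φ hφ, fun h => h.comap φ⟩
  simp only [IsChiefFactor, hnormal, comap_lt_comap_of_surjective hφ]
  refine and_congr_right' <| and_congr_right' <| and_congr_right' ⟨fun h L hL hKL hLH => ?_,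
    fun h L hL hKL hLH => ?_⟩
  · exact h (L.comap φ) ((hnormal L).mpr hL) (comap_lt_comap_of_surjective hφ |>.mpr hKL)
      (comap_lt_comap_of_surjective hφ |>.mpr hLH)
  · have hker : φ.ker ≤ L := (ker_le_comap φ K).trans hKL.le
    rw [← comap_map_eq_self hker, comap_lt_comap_of_surjective hφ] at hKL hLH
    exact h (L.map φ) (hL.map φ hφ) hKL hLH

theorem IsChiefFactor.map {Q : Type} [Group Q] {φ : G →* Q} (hφ : Function.Surjective φ)
    {H K : Subgroup G} (hc : IsChiefFactor G H K) (hK : φ.ker ≤ K) :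
    IsChiefFactor Q (H.map φ) (K.map φ) := by
  rwa [← isChiefFactor_comap_iff hφ, comap_map_eq_self hK,
    comap_map_eq_self (hK.trans hc.2.2.1.le)]

theorem isChiefFactor_inf_iff_sup (A K : Subgroup G) [A.Normal] [K.Normal] :
    IsChiefFactor G A (A ⊓ K) ↔ IsChiefFactor G (A ⊔ K) K := by
  constructor
  · rintro ⟨-, -, hlt, hchief⟩
    refine ⟨inferInstance, inferInstance,
      lt_of_le_of_ne le_sup_right fun h => hlt.ne (inf_eq_left.mpr (h ▸ le_sup_left)), ?_⟩
    intro L hL hKL hLH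
    refine hchief (A ⊓ L) inferInstance ?_ ?_
    · refine lt_of_le_of_ne (inf_le_inf_left A hKL.le) fun h => hKL.ne ?_
      have := Subgroup.sup_inf_assoc_of_le A hKL.le
      rwa [← h, sup_eq_left.mpr inf_le_right, sup_comm, inf_eq_right.mpr hLH.le] at this
    · refine lt_of_le_of_ne inf_le_left fun h => hLH.ne ?_
      exact le_antisymm hLH.le (sup_le (inf_eq_left.mp h) hKL.le)
  · rintro ⟨-, -, hlt, hchief⟩
    refine ⟨inferInstance, inferInstance,
      lt_of_le_of_ne inf_le_left fun h => hlt.ne' (sup_eq_right.mpr (h ▸ inf_le_right)), ?_⟩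
    intro L hL hlow hhigh
    refine hchief (L ⊔ K) inferInstance ?_ ?_
    · refine lt_of_le_of_ne le_sup_right fun h => hlow.ne' ?_
      exact le_antisymm (le_inf hhigh.le (h ▸ le_sup_left)) hlow.le
    · refine lt_of_le_of_ne (sup_le_sup_right hhigh.le K) fun h => hhigh.ne ?_
      have := Subgroup.sup_inf_assoc_of_le K hhigh.le
      rwa [h, inf_eq_right.mpr (le_sup_left : A ≤ A ⊔ K), inf_comm, sup_eq_left.mpr hlow.le]
        at this

theorem isGIsomorphicFactors_inf_sup (A K : Subgroup G) [hA : A.Normal] [hK : K.Normal] :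
    IsGIsomorphicFactors G A (A ⊓ K) (A ⊔ K) K := by
  refine ⟨hA, inferInstance, inferInstance, hK,
    (quotientMulEquivOfEq (inf_subgroupOf_left K A)).trans
      (quotientInfEquivProdNormalQuotient A K), ?_⟩
  intro g x y hxy
  change (mk (inclusion le_sup_left x) : ↥(A ⊔ K) ⧸ K.subgroupOf (A ⊔ K)) = mk y at hxy
  change (mk (inclusion le_sup_left (normalConj hA g x)) : ↥(A ⊔ K) ⧸ K.subgroupOf (A ⊔ K)) =
    mk (normalConj _ g y)
  rw [QuotientGroup.eq, mem_subgroupOf] at hxy ⊢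
  simpa [normalConj, mul_assoc] using hK.conj_mem _ hxy g

theorem IsChiefFactor.le_or_sup_eq {H K : Subgroup G} (hc : IsChiefFactor G H K)
    {A : Subgroup G} [A.Normal] (hAH : A ≤ H) : A ≤ K ∨ A ⊔ K = H := by
  obtain ⟨-, hK, hKH, hchief⟩ := hc
  refine or_iff_not_imp_left.mpr fun hAK => by_contra fun hne => ?_
  refine hchief (A ⊔ K) inferInstance ?_ ?_
  · exact lt_of_le_of_ne le_sup_right fun h => hAK (h ▸ le_sup_left)
  · exact lt_of_le_of_ne (sup_le hAH hKH.le) hne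

end ChiefFactor

namespace IsChiefFactorFun

variable {f : ChiefFactorFun} {G : Type} [Group G] [Finite G]

theorem apply_inf_eq_apply_sup (hf : IsChiefFactorFun f) {A K : Subgroup G} [A.Normal]
    [K.Normal] (hc : IsChiefFactor G A (A ⊓ K)) : f G A (A ⊓ K) = f G (A ⊔ K) K :=
  hf.iso_inv G _ _ _ _ hc ((isChiefFactor_inf_iff_sup A K).mp hc)
    (isGIsomorphicFactors_inf_sup A K)

theorem apply_eq_true_of_inf_le (hf : IsChiefFactorFun f) {L H K : Subgroup G} [L.Normal]
    (hL : CClass f (G ⧸ L)) (hc : IsChiefFactor G H K) (hHL : H ⊓ L ≤ K) : f G H K = true := by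
  have : H.Normal := hc.1
  have : K.Normal := hc.2.1
  have hinf : H ⊓ (K ⊔ L) = K := by
    rw [inf_comm, ← Subgroup.sup_inf_assoc_of_le L hc.2.2.1.le, inf_comm, sup_eq_left.mpr hHL]
  have hc' : IsChiefFactor G H (H ⊓ (K ⊔ L)) := by rwa [hinf]
  have hsup := (isChiefFactor_inf_iff_sup H (K ⊔ L)).mp hc'
  rw [← hinf, hf.apply_inf_eq_apply_sup hc', hf.quot_inv G _ _ L hsup le_sup_right]
  exact hL _ _ (hsup.map (mk'_surjective L) ((ker_mk' L).le.trans le_sup_right))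

theorem cClass_quotient (hf : IsChiefFactorFun f) (hG : CClass f G) (N : Subgroup G)
    [N.Normal] : CClass f (G ⧸ N) := by
  intro H K hc
  have hc' := (isChiefFactor_comap_iff (mk'_surjective N)).mpr hc
  have := hf.quot_inv G _ _ N hc' ((ker_mk' N).ge.trans (ker_le_comap _ K))
  rw [map_comap_eq_self_of_surjective (mk'_surjective N),
    map_comap_eq_self_of_surjective (mk'_surjective N)] at this
  exact this ▸ hG _ _ hc'

theorem cClass_of_inf_eq_bot (hf : IsChiefFactorFun f) {N M : Subgroup G} [N.Normal] [M.Normal]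
    (hNM : N ⊓ M = ⊥) (hN : CClass f (G ⧸ N)) (hM : CClass f (G ⧸ M)) : CClass f G := by
  intro H K hc
  have : H.Normal := hc.1
  have : K.Normal := hc.2.1
  rcases hc.le_or_sup_eq (A := H ⊓ N) inf_le_left with hHN | hsup
  · exact hf.apply_eq_true_of_inf_le hN hc hHN
  · have hcA : IsChiefFactor G (H ⊓ N) (H ⊓ N ⊓ K) :=
      (isChiefFactor_inf_iff_sup _ K).mpr (by rwa [hsup])
    have hdisj : H ⊓ N ⊓ M ≤ H ⊓ N ⊓ K :=
      calc H ⊓ N ⊓ M ≤ N ⊓ M := inf_le_inf_right M inf_le_right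
        _ = ⊥ := hNM
        _ ≤ _ := bot_le
    rw [← hsup, ← hf.apply_inf_eq_apply_sup hcA]
    exact hf.apply_eq_true_of_inf_le hM hcA hdisj

end IsChiefFactorFun

/-- If `f` is a chief factor function, then `C(f)` is a formation:
it is closed under taking quotients and under subdirect products. -/
theorem stmt0 (f : ChiefFactorFun) (hf : IsChiefFactorFun f) :
    (∀ (G : Type) [Group G] [Finite G] (N : Subgroup G) [N.Normal],
        CClass f G → CClass f (G ⧸ N)) ∧
    (∀ (G : Type) [Group G] [Finite G] (N M : Subgroup G) [N.Normal] [M.Normal],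
        N ⊓ M = ⊥ → CClass f (G ⧸ N) → CClass f (G ⧸ M) → CClass f G) :=
  ⟨fun _ _ _ N _ hG => hf.cClass_quotient hG N, fun _ _ _ _ _ _ _ => hf.cClass_of_inf_eq_bot⟩
end

section
/- Let G be a finite group and let A be a normal subgroup of G which is an internal direct product of non-abelian simple subgroups. Then there exist minimal normal subgroups A₁, …, A_k of G such that A is the internal direct product of A₁, …, A_k. -/
open scoped commutatorElement

/-! Every subgroup of `A` normalized by `A` is the product of the simple factors it contains,
because a factor it does not contain meets it trivially, hence centralizes it, and `A` has
trivial centre. The normal closures `Cᵢ` of the factors in `G` are such subgroups. If a factor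
`Sⱼ` lies in `Cᵢ`, then `Sᵢ` lies in `Cⱼ`: otherwise `Cⱼ` centralizes `Sᵢ`, hence all of `Cᵢ`,
and so the non-abelian `Sⱼ ≤ Cᵢ ⊓ Cⱼ` would be abelian. Thus two normal closures that share a
factor coincide, so the distinct `Cᵢ` are minimal normal in `G` and correspond to a partition
of the factors, which makes `A` their internal direct product. -/

open Subgroup Function

section General

variable {G : Type} [Group G]

lemma Subgroup.centralizer_sup (H K : Subgroup G) :
    centralizer (↑(H ⊔ K) : Set G) = centralizer (H : Set G) ⊓ centralizer (K : Set G) :=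
  le_antisymm
    (le_inf (centralizer_le (SetLike.coe_subset_coe.mpr le_sup_left))
      (centralizer_le (SetLike.coe_subset_coe.mpr le_sup_right)))
    (le_centralizer_iff.mp
      (sup_le (le_centralizer_iff.mp inf_le_left) (le_centralizer_iff.mp inf_le_right)))

lemma Subgroup.le_centralizer_of_le_normalizer_of_disjoint {H K : Subgroup G}
    (hHK : H ≤ normalizer K) (hKH : K ≤ normalizer H) (hd : Disjoint H K) :
    H ≤ centralizer K := by
  rw [← commutator_eq_bot_iff_le_centralizer, ← le_bot_iff, ← hd.eq_bot]
  exact le_inf (le_normalizer_iff_commutator_le_left.mp hKH)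
    (le_normalizer_iff_commutator_le_right.mp hHK)

lemma Subgroup.mem_sup_of_le_centralizer {H K : Subgroup G} (hHK : H ≤ centralizer K) {x : G}
    (hx : x ∈ H ⊔ K) : ∃ h ∈ H, ∃ k ∈ K, h * k = x := by
  rwa [← SetLike.mem_coe,
    coe_mul_of_left_le_normalizer_right H K (hHK.trans (centralizer_le_normalizer _))] at hx

lemma Subgroup.le_or_disjoint_of_le_normalizer {S N : Subgroup G} [IsSimpleGroup S]
    (hSN : S ≤ normalizer N) : S ≤ N ∨ Disjoint N S := by
  have := normal_subgroupOf_of_le_normalizer hSN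
  rcases IsSimpleGroup.eq_bot_or_eq_top_of_normal _ this with h | h
  · exact Or.inr (subgroupOf_eq_bot.mp h)
  · exact Or.inl (subgroupOf_eq_top.mp h)

namespace IsNonabelianSimple

variable {S : Subgroup G} (hS : IsNonabelianSimple S)
include hS

lemma not_le_centralizer : ¬ S ≤ centralizer S := fun h => by
  obtain ⟨x, y, hxy⟩ := hS.2
  exact hxy (Subtype.ext (h y.2 x x.2))

lemma ne_bot : S ≠ ⊥ :=
  (nontrivial_iff_ne_bot S).mp hS.1.toNontrivial

lemma disjoint_centralizer : Disjoint (centralizer S) S := by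
  have := hS.1
  have hnorm : S ≤ normalizer (centralizer (S : Set G)) :=
    le_normalizer_iff.mpr fun s hs c hc => by rwa [hc s hs, mul_inv_cancel_right]
  exact (le_or_disjoint_of_le_normalizer hnorm).resolve_left hS.not_le_centralizer

end IsNonabelianSimple

variable {ι : Type} {S : ι → Subgroup G}

lemma biSup_le_centralizer_biSup (hcomm : Pairwise fun i j => S i ≤ centralizer (S j))
    {s t : Set ι} (hst : Disjoint s t) :
    (⨆ i ∈ s, S i) ≤ centralizer (⨆ j ∈ t, S j : Subgroup G) :=
  le_centralizer_iff.mpr <| iSup₂_le fun _ hj => le_centralizer_iff.mp <| iSup₂_le fun _ hi =>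
    hcomm fun hij => Set.disjoint_left.mp hst hi (hij ▸ hj)

lemma disjoint_centralizer_biSup (hcomm : Pairwise fun i j => S i ≤ centralizer (S j))
    (hS : ∀ i, Disjoint (centralizer (S i)) (S i)) (F : Finset ι) :
    Disjoint (centralizer (⨆ i ∈ F, S i : Subgroup G)) (⨆ i ∈ F, S i) := by
  classical
  induction F using Finset.induction_on with
  | empty => simp
  | @insert j F hj ih =>
    set P := ⨆ i ∈ F, S i
    have hPj : P ≤ centralizer (S j) :=
      iSup₂_le fun i hi => hcomm (fun h => hj (h ▸ hi))
    rw [Finset.iSup_insert, centralizer_sup, disjoint_def]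
    intro z hzC hz
    obtain ⟨hzj, hzP⟩ := mem_inf.mp hzC
    obtain ⟨b, hb, c, hc, rfl⟩ := mem_sup_of_le_centralizer (le_centralizer_iff.mp hPj) hz
    have hb1 : b = 1 := by
      refine disjoint_def.mp (hS j) ?_ hb
      simpa using mul_mem hzj (inv_mem (hPj hc))
    subst hb1
    rw [one_mul] at hzP ⊢
    exact disjoint_def.mp ih hzP hc

end General

def normalClosures {G ι : Type} [Group G] (S : ι → Subgroup G) : Set (Subgroup G) :=
  Set.range fun i => normalClosure (S i : Set G)

namespace IsInternalDirectProduct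

variable {G : Type} [Group G] {A : Subgroup G} {ι : Type} {S : ι → Subgroup G}

lemma comp_equiv {κ : Type} (hdp : IsInternalDirectProduct A S) (e : κ ≃ ι) :
    IsInternalDirectProduct A (S ∘ e) := by
  obtain ⟨hle, hnormal, hsup, hindep⟩ := hdp
  refine ⟨fun k => hle (e k), fun k => hnormal (e k), e.iSup_comp.trans hsup, fun k => ?_⟩
  have : iSupIndep (S ∘ e) :=
    (iSupIndep_def.mpr fun i => disjoint_iff.mpr (hindep i)).comp e.injective
  exact (iSupIndep_def.mp this k).eq_bot

variable (hdp : IsInternalDirectProduct A S)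
include hdp

lemma iSupIndep : iSupIndep S :=
  iSupIndep_def.mpr fun i => disjoint_iff.mpr (hdp.2.2.2 i)

lemma le_normalizer (i : ι) : A ≤ normalizer (S i) :=
  (normal_subgroupOf_iff_le_normalizer (hdp.1 i)).mp (hdp.2.1 i)

lemma pairwise_le_centralizer : Pairwise fun i j => S i ≤ centralizer (S j) := fun i j hij =>
  le_centralizer_of_le_normalizer_of_disjoint ((hdp.1 i).trans (hdp.le_normalizer j))
    ((hdp.1 j).trans (hdp.le_normalizer i)) (hdp.iSupIndep.pairwiseDisjoint hij)

lemma biSup_sup_biSup_compl (s : Set ι) : (⨆ i ∈ s, S i) ⊔ (⨆ i ∈ sᶜ, S i) = A := by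
  rw [← iSup_union, Set.union_compl_self, iSup_univ, hdp.2.2.1]

lemma normalClosure_le (hA : A.Normal) (i : ι) : normalClosure (S i : Set G) ≤ A :=
  normalClosure_le_normal (hdp.1 i)

variable (hS : ∀ i, IsNonabelianSimple (S i))
include hS

lemma finite_indices [Finite G] : Finite ι :=
  Finite.of_injective S (hdp.iSupIndep.injective fun i => (hS i).ne_bot)

lemma disjoint_centralizer [Finite ι] : Disjoint (centralizer A) A := by
  have := Fintype.ofFinite ι
  have := disjoint_centralizer_biSup hdp.pairwise_le_centralizer
    (fun i => (hS i).disjoint_centralizer) Finset.univ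
  simpa only [Finset.mem_univ, iSup_pos, hdp.2.2.1] using this

lemma disjoint_biSup_compl [Finite ι] (s : Set ι) :
    Disjoint (⨆ i ∈ s, S i) (⨆ i ∈ sᶜ, S i) := by
  rw [disjoint_def]
  intro x hx hxc
  refine disjoint_def.mp (hdp.disjoint_centralizer hS) ?_ ((iSup₂_le fun i _ => hdp.1 i) hx)
  rw [← hdp.biSup_sup_biSup_compl s, centralizer_sup]
  exact ⟨biSup_le_centralizer_biSup hdp.pairwise_le_centralizer disjoint_compl_left hxc,
    biSup_le_centralizer_biSup hdp.pairwise_le_centralizer disjoint_compl_right hx⟩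

lemma iSupIndep_biSup [Finite ι] {κ : Type} {s : κ → Set ι} (hs : Pairwise (Disjoint on s)) :
    _root_.iSupIndep fun m => ⨆ i ∈ s m, S i :=
  iSupIndep_def.mpr fun m => (hdp.disjoint_biSup_compl hS (s m)).mono_right <|
    iSup₂_le fun _ hm' => biSup_mono fun _ hi => Set.disjoint_left.mp (hs hm') hi

section

variable {N : Subgroup G} (hNA : N ≤ A) (hN : A ≤ normalizer N)
include hNA hN

lemma le_centralizer_of_not_le {i : ι} (hi : ¬ S i ≤ N) : N ≤ centralizer (S i) := by
  have := (hS i).1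
  have hdisj := (le_or_disjoint_of_le_normalizer ((hdp.1 i).trans hN)).resolve_left hi
  exact le_centralizer_of_le_normalizer_of_disjoint (hNA.trans (hdp.le_normalizer i))
    ((hdp.1 i).trans hN) hdisj

lemma eq_biSup_le [Finite ι] : N = ⨆ i ∈ {i | S i ≤ N}, S i := by
  set s := {i | S i ≤ N}
  refine le_antisymm (fun n hn => ?_) (iSup₂_le fun _ hi => hi)
  have hn' := hNA hn
  rw [← hdp.biSup_sup_biSup_compl s] at hn'
  obtain ⟨b, hb, c, hc, rfl⟩ := mem_sup_of_le_centralizer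
    (biSup_le_centralizer_biSup hdp.pairwise_le_centralizer disjoint_compl_right) hn'
  have hcN : c ∈ N := by
    simpa using mul_mem (inv_mem ((iSup₂_le fun _ hi => hi : ⨆ i ∈ s, S i ≤ N) hb)) hn
  have hcA : c ∈ centralizer (A : Set G) := by
    rw [← hdp.biSup_sup_biSup_compl s, centralizer_sup]
    refine ⟨biSup_le_centralizer_biSup hdp.pairwise_le_centralizer disjoint_compl_left hc, ?_⟩
    refine le_centralizer_iff.mpr (iSup₂_le fun i hi => ?_) hcN
    exact le_centralizer_iff.mp (hdp.le_centralizer_of_not_le hS hNA hN hi)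
  rw [disjoint_def.mp (hdp.disjoint_centralizer hS) hcA (hNA hcN), mul_one]
  exact hb

lemma exists_le_of_ne_bot [Finite ι] (hne : N ≠ ⊥) : ∃ i, S i ≤ N := by
  by_contra! h
  refine hne ((hdp.eq_biSup_le hS hNA hN).trans ?_)
  simp [h]

end

variable (hA : A.Normal)
include hA

lemma le_normalClosure_comm [Finite ι] {i j : ι} (hji : S j ≤ normalClosure (S i : Set G)) :
    S i ≤ normalClosure (S j : Set G) := by
  by_contra hij
  have hCj := hdp.le_centralizer_of_not_le hS (hdp.normalClosure_le hA j)
    le_normalizer_of_normal hij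
  have hCi : normalClosure (S i : Set G) ≤ centralizer (normalClosure (S j : Set G)) :=
    normalClosure_le_normal (le_centralizer_iff.mp hCj)
  exact (hS j).not_le_centralizer
    (hji.trans (hCi.trans (centralizer_le subset_normalClosure)))

lemma normalClosure_eq_of_le [Finite ι] {i j : ι} (hji : S j ≤ normalClosure (S i : Set G)) :
    normalClosure (S i : Set G) = normalClosure (S j : Set G) :=
  le_antisymm (normalClosure_le_normal (hdp.le_normalClosure_comm hS hA hji))
    (normalClosure_le_normal hji)

lemma isMinimalNormal_normalClosure [Finite ι] (i : ι) :
    IsMinimalNormal (normalClosure (S i : Set G)) := by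
  refine ⟨inferInstance, fun h => (hS i).ne_bot (le_bot_iff.mp (h ▸ subset_normalClosure)),
    fun N hN hNC hne => ?_⟩
  obtain ⟨j, hj⟩ := hdp.exists_le_of_ne_bot hS (hNC.trans (hdp.normalClosure_le hA i))
    le_normalizer_of_normal hne
  refine le_antisymm hNC ?_
  rw [hdp.normalClosure_eq_of_le hS hA (hj.trans hNC)]
  exact normalClosure_le_normal hj

lemma isInternalDirectProduct_normalClosure [Finite ι] :
    IsInternalDirectProduct A
      (Subtype.val : normalClosures S → Subgroup G) := by
  have hblocks : Pairwise (Disjoint on fun C : normalClosures S => {i | S i ≤ C.1}) := by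
    rintro ⟨_, a, rfl⟩ ⟨_, b, rfl⟩ hab
    refine Set.disjoint_left.mpr fun i hia hib => hab (Subtype.ext ?_)
    exact (hdp.normalClosure_eq_of_le hS hA hia).trans (hdp.normalClosure_eq_of_le hS hA hib).symm
  have hblocks_sup : (Subtype.val : normalClosures S → _) =
      fun C => ⨆ i ∈ {i | S i ≤ C.1}, S i := by
    funext ⟨_, a, rfl⟩
    exact hdp.eq_biSup_le hS (hdp.normalClosure_le hA a) le_normalizer_of_normal
  have hindep : _root_.iSupIndep (Subtype.val : normalClosures S → _) := by
    rw [hblocks_sup]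
    exact hdp.iSupIndep_biSup hS hblocks
  refine ⟨fun ⟨_, i, hi⟩ => hi ▸ hdp.normalClosure_le hA i,
    fun ⟨_, i, hi⟩ => hi ▸ normalClosure_normal.subgroupOf A, le_antisymm ?_ ?_,
    fun C => (iSupIndep_def.mp hindep C).eq_bot⟩
  · exact iSup_le fun ⟨_, i, hi⟩ => hi ▸ hdp.normalClosure_le hA i
  · exact hdp.2.2.1.ge.trans (iSup_le fun i => le_iSup_of_le ⟨_, i, rfl⟩ subset_normalClosure)

end IsInternalDirectProduct

/-- If `A` is a normal subgroup of a finite group `G` which is an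
internal direct product of non-abelian simple subgroups, then there are minimal
normal subgroups `A₁, …, A_k` of `G` such that `A` is the internal direct product
of `A₁, …, A_k`. -/
theorem stmt5 (G : Type) [Group G] [Finite G] (A : Subgroup G) (hA : A.Normal)
    (ι : Type) (S : ι → Subgroup G) (hS : ∀ i, IsNonabelianSimple ↥(S i))
    (hdp : IsInternalDirectProduct A S) :
    ∃ (k : ℕ) (C : Fin k → Subgroup G),
      (∀ i, IsMinimalNormal (C i)) ∧ IsInternalDirectProduct A C := by
  have := hdp.finite_indices hS
  let e := Finite.equivFin (normalClosures S)
  refine ⟨_, fun m => e.symm m, fun m => ?_,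
    (hdp.isInternalDirectProduct_normalClosure hS hA).comp_equiv e.symm⟩
  obtain ⟨i, hi⟩ := (e.symm m).2
  dsimp only
  rw [← hi]
  exact hdp.isMinimalNormal_normalClosure hS hA i
end

section
/- Let G be a finite group, N a normal subgroup of G, and p a prime. Consider the set of all normal subgroups K of G with K ≤ N such that N/K is an internal direct product of minimal normal subgroups of G/K each of which is a p-group (the case K = N, with the empty product, is allowed). This set has a smallest element, denoted Res_p(N,G); that is, Res_p(N,G) is a normal subgroup of G below N with N/Res_p(N,G) an internal direct product of minimal normal p-subgroups of G/Res_p(N,G), and Res_p(N,G) is contained in every normal subgroup K of G below N with that property. -/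
open scoped commutatorElement

/-- `N/K` is an internal direct product of minimal normal subgroups of `G/K`, each of
which is a `p`-group (`K` a normal subgroup of `G` with `K ≤ N`; the empty product,
i.e. `K = N`, is allowed). -/
def QuotDirProdMinP (G : Type) [Group G] [Finite G] (p : ℕ) (N K : Subgroup G)
    (hK : K.Normal) : Prop :=
  haveI := hK
  ∃ (k : ℕ) (B : Fin k → Subgroup (G ⧸ K)),
    (∀ i, IsMinimalNormal (B i) ∧ ∃ n : ℕ, Nat.card ↥(B i) = p ^ n) ∧
    IsInternalDirectProduct (N.map (QuotientGroup.mk' K)) B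

/-!
`N/K` is a direct product of minimal normal `p`-subgroups of `G/K` exactly when `N/K` is a
`p`-group and every normal subgroup of `G` between `K` and `N` has a normal complement between
`K` and `N`: a product of minimal normal subgroups is complemented (extend a maximal partial
complement by a missing factor), and conversely one splits off minimal normal subgroups one at a
time. Both conditions pass from `K₁` and `K₂` to `K₁ ⊓ K₂`, the second by the modular law for
normal subgroups, so a minimal such `K` is the smallest one.
-/

namespace Subgroup

variable {G : Type*} [Group G]

open scoped Pointwise in
theorem sup_inf_eq_of_le_of_normal {x y z : Subgroup G} [y.Normal] (hxz : x ≤ z) :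
    (x ⊔ y) ⊓ z = x ⊔ y ⊓ z := by
  refine le_antisymm (fun g ⟨hxy, hz⟩ => ?_)
    (le_inf (sup_le_sup_left inf_le_left x) (sup_le hxz inf_le_right))
  have hg : g ∈ (x : Set G) * ((y ⊓ z : Subgroup G) : Set G) := by
    rw [mul_inf_assoc x y z hxz, ← mul_normal]
    exact ⟨hxy, hz⟩
  obtain ⟨a, ha, b, hb, rfl⟩ := hg
  exact mul_mem (mem_sup_left ha) (mem_sup_right hb)

end Subgroup

open Subgroup

section Complements

variable {G H : Type*} [Group G] [Group H]

def IsNormalComplemented (K N : Subgroup G) : Prop :=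
  ∀ L : Subgroup G, L.Normal → K ≤ L → L ≤ N →
    ∃ C : Subgroup G, C.Normal ∧ K ≤ C ∧ C ≤ N ∧ L ⊓ C = K ∧ L ⊔ C = N

theorem isNormalComplemented_self {N : Subgroup G} (hN : N.Normal) : IsNormalComplemented N N :=
  fun _ _ hNL hLN => ⟨N, hN, le_rfl, le_rfl, by rw [le_antisymm hLN hNL, inf_idem],
    by rw [le_antisymm hLN hNL, sup_idem]⟩

theorem IsNormalComplemented.of_le {K N M : Subgroup G} (h : IsNormalComplemented K N)
    [M.Normal] (hKM : K ≤ M) (hMN : M ≤ N) : IsNormalComplemented K M := by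
  intro L hL hKL hLM
  obtain ⟨C, hC, hKC, -, hLC, hLCN⟩ := h L hL hKL (hLM.trans hMN)
  refine ⟨C ⊓ M, normal_inf_normal C M, le_inf hKC hKM, inf_le_right, ?_, ?_⟩
  · rw [← inf_assoc, hLC, inf_eq_left.2 hKM]
  · rw [← sup_inf_eq_of_le_of_normal hLM, hLCN, inf_eq_right.2 hMN]

theorem IsNormalComplemented.inf {K₁ K₂ N : Subgroup G} [K₁.Normal] [K₂.Normal]
    (h₁ : IsNormalComplemented K₁ N) (h₂ : IsNormalComplemented K₂ N)
    (hK₁N : K₁ ≤ N) (hK₂N : K₂ ≤ N) : IsNormalComplemented (K₁ ⊓ K₂) N := by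
  intro L hL hKL hLN
  obtain ⟨C₁, hC₁, hK₁C₁, hC₁N, hLC₁, hLC₁N⟩ :=
    h₁ (L ⊔ K₁) (sup_normal L K₁) le_sup_right (sup_le hLN hK₁N)
  obtain ⟨C₂, hC₂, hK₂C₂, -, hLC₂, hLC₂N⟩ :=
    h₂ (L ⊓ C₁ ⊔ K₂) (sup_normal _ K₂) le_sup_right (sup_le (inf_le_left.trans hLN) hK₂N)
  rw [sup_assoc, sup_eq_right.2 hK₁C₁] at hLC₁N
  rw [sup_assoc, sup_eq_right.2 hK₂C₂] at hLC₂N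
  have hC₁_eq : C₁ = L ⊓ C₁ ⊔ C₂ ⊓ C₁ := by
    rw [← sup_inf_eq_of_le_of_normal inf_le_right, hLC₂N, inf_eq_right.2 hC₁N]
  refine ⟨C₁ ⊓ C₂, normal_inf_normal C₁ C₂, inf_le_inf hK₁C₁ hK₂C₂, inf_le_left.trans hC₁N,
    le_antisymm (le_inf ?_ ?_) (le_inf hKL (inf_le_inf hK₁C₁ hK₂C₂)), ?_⟩
  · calc L ⊓ (C₁ ⊓ C₂) ≤ (L ⊔ K₁) ⊓ C₁ :=
          le_inf (inf_le_left.trans le_sup_left) (inf_le_right.trans inf_le_left)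
      _ = K₁ := hLC₁
  · calc L ⊓ (C₁ ⊓ C₂) ≤ (L ⊓ C₁ ⊔ K₂) ⊓ C₂ :=
          le_inf (le_sup_of_le_left (inf_le_inf_left L inf_le_left))
            (inf_le_right.trans inf_le_right)
      _ = K₂ := hLC₂
  · refine le_antisymm (sup_le hLN (inf_le_left.trans hC₁N)) ?_
    calc N = L ⊔ C₁ := hLC₁N.symm
      _ = L ⊔ C₂ ⊓ C₁ := by
          conv_lhs => rw [hC₁_eq]
          rw [← sup_assoc, sup_inf_self]
      _ ≤ L ⊔ C₁ ⊓ C₂ := by rw [inf_comm]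

theorem isNormalComplemented_ker_iff_bot_map {f : G →* H} (hf : Function.Surjective f)
    {N : Subgroup G} (hN : f.ker ≤ N) : IsNormalComplemented f.ker N ↔ IsNormalComplemented ⊥ (N.map f) := by
  have comap_map : ∀ {L : Subgroup G}, f.ker ≤ L → (L.map f).comap f = L := fun hL => by
    rw [comap_map_eq, sup_eq_left.2 hL]
  constructor
  · intro h L hL _ hLN
    obtain ⟨C, hC, hKC, hCN, hLC, hLCN⟩ :=
      h (L.comap f) (hL.comap f) (ker_le_comap f L) (comap_map hN ▸ comap_mono hLN)
    refine ⟨C.map f, hC.map f hf, bot_le, map_mono hCN, comap_injective hf ?_,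
      comap_injective hf ?_⟩
    · rw [comap_inf, comap_map hKC, hLC, MonoidHom.comap_bot]
    · rw [← comap_sup_eq f _ _ hf, comap_map hKC, hLCN, comap_map hN]
  · intro h L hL hKL hLN
    obtain ⟨C, hC, -, hCN, hLC, hLCN⟩ := h (L.map f) (hL.map f hf) bot_le (map_mono hLN)
    refine ⟨C.comap f, hC.comap f, ker_le_comap f C, comap_map hN ▸ comap_mono hCN, ?_, ?_⟩
    · rw [← comap_map hKL, ← comap_inf, hLC, MonoidHom.comap_bot]
    · rw [← comap_map hKL, comap_sup_eq f _ _ hf, hLCN, comap_map hN]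

end Complements

theorem iSup_fin_cons {α : Type*} [CompleteLattice α] {k : ℕ} (b : α) (a : Fin k → α) :
    ⨆ i, (Fin.cons b a : Fin (k + 1) → α) i = b ⊔ ⨆ i, a i :=
  le_antisymm (iSup_le (Fin.cases le_sup_left fun i => le_sup_of_le_right (le_iSup a i)))
    (sup_le (le_iSup_of_le 0 le_rfl) (iSup_le fun i => le_iSup_of_le i.succ le_rfl))

section MinimalNormal

variable {G : Type} [Group G]

theorem exists_isMinimalNormal_le [Finite G] {M : Subgroup G} (hM : M.Normal) (hM' : M ≠ ⊥) :
    ∃ B, IsMinimalNormal B ∧ B ≤ M := by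
  obtain ⟨B, ⟨hB, hB', hBM⟩, hmin⟩ :=
    (Set.toFinite {B : Subgroup G | B.Normal ∧ B ≠ ⊥ ∧ B ≤ M}).exists_minimal
      ⟨M, hM, hM', le_rfl⟩
  exact ⟨B, ⟨hB, hB', fun D hD hDB hD' =>
    le_antisymm hDB (hmin ⟨hD, hD', hDB.trans hBM⟩ hDB)⟩, hBM⟩

theorem isNormalComplemented_bot_iSup [Finite G] {ι : Type*} {B : ι → Subgroup G}
    (hB : ∀ i, IsMinimalNormal (B i)) : IsNormalComplemented ⊥ (⨆ i, B i) := by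
  intro L hL _ hLM
  obtain ⟨C, ⟨hC, hCM, hLC⟩, hmax⟩ :=
    (Set.toFinite {C : Subgroup G | C.Normal ∧ C ≤ ⨆ i, B i ∧ L ⊓ C = ⊥}).exists_maximal
      ⟨⊥, normal_bot, bot_le, inf_bot_eq L⟩
  refine ⟨C, hC, bot_le, hCM, hLC, le_antisymm (sup_le hLM hCM) (iSup_le fun i => ?_)⟩
  by_contra hi
  have := hC
  have := (hB i).1
  have hBi : B i ⊓ (L ⊔ C) = ⊥ := by
    by_contra hne
    exact hi (inf_eq_left.1 ((hB i).2.2 _ (normal_inf_normal _ _) inf_le_left hne))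
  have hLCB : L ⊓ (C ⊔ B i) = ⊥ := by
    refine le_bot_iff.1 (hLC ▸ le_inf inf_le_left ?_)
    calc L ⊓ (C ⊔ B i) ≤ (C ⊔ B i) ⊓ (L ⊔ C) :=
          le_inf inf_le_right (inf_le_left.trans le_sup_left)
      _ = C := by rw [sup_inf_eq_of_le_of_normal le_sup_right, hBi, sup_bot_eq]
  have hBC : C ⊔ B i ≤ C :=
    hmax ⟨sup_normal C (B i), sup_le hCM (le_iSup B i), hLCB⟩ le_sup_left
  exact hi (le_sup_right.trans hBC |>.trans le_sup_right)

theorem isInternalDirectProduct_cons {M B C : Subgroup G} [B.Normal] {k : ℕ}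
    {A : Fin k → Subgroup G} (hA : ∀ i, (A i).Normal) (hAC : IsInternalDirectProduct C A)
    (hBC : B ⊓ C = ⊥) (hBCM : B ⊔ C = M) : IsInternalDirectProduct M (Fin.cons B A) := by
  obtain ⟨hAle, -, hAsup, hAind⟩ := hAC
  have hCM : C ≤ M := hBCM ▸ le_sup_right
  refine ⟨Fin.cases (hBCM ▸ le_sup_left) fun i => (hAle i).trans hCM,
    Fin.cases (Normal.subgroupOf ‹B.Normal› M) fun i => (hA i).subgroupOf M,
    by rw [iSup_fin_cons, hAsup, hBCM], fun i => ?_⟩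
  induction i using Fin.cases with
  | zero =>
    refine le_bot_iff.1 (hBC ▸ inf_le_inf_left B (iSup₂_le fun j hj => ?_))
    induction j using Fin.cases with
    | zero => exact absurd rfl hj
    | succ j => exact hAle j
  | succ i =>
    set R := ⨆ (j) (_ : j ≠ i), A j
    have hRC : R ≤ C := iSup₂_le fun j _ => hAle j
    have hcons :
        ⨆ (j) (_ : j ≠ i.succ), (Fin.cons B A : Fin (k + 1) → Subgroup G) j ≤ R ⊔ B := by
      refine iSup₂_le fun j hj => ?_
      induction j using Fin.cases with
      | zero => exact le_sup_right
      | succ j => exact le_sup_of_le_left (le_iSup₂_of_le j (fun h => hj (h ▸ rfl)) le_rfl)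
    refine le_bot_iff.1 (hAind i ▸ le_inf inf_le_left ?_)
    calc A i ⊓ _ ≤ (R ⊔ B) ⊓ C :=
          le_inf (inf_le_right.trans hcons) (inf_le_left.trans (hAle i))
      _ = R := by rw [sup_inf_eq_of_le_of_normal hRC, hBC, sup_bot_eq]

theorem IsNormalComplemented.exists_isInternalDirectProduct [Finite G] {M : Subgroup G}
    (h : IsNormalComplemented ⊥ M) : ∃ (k : ℕ) (B : Fin k → Subgroup G),
      (∀ i, IsMinimalNormal (B i)) ∧ IsInternalDirectProduct M B := by
  induction M using WellFoundedLT.induction with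
  | _ M ih =>
  -- the complement of `⊥` in `M` is `M` itself
  have hM : M.Normal := by
    obtain ⟨C, hC, -, -, -, hCM⟩ := h ⊥ normal_bot le_rfl bot_le
    rwa [← bot_sup_eq C, hCM] at hC
  by_cases hbot : M = ⊥
  · subst hbot
    exact ⟨0, Fin.elim0, fun i => i.elim0, fun i => i.elim0, fun i => i.elim0, by simp,
      fun i => i.elim0⟩
  obtain ⟨B, hB, hBM⟩ := exists_isMinimalNormal_le hM hbot
  obtain ⟨C, hC, -, hCM, hBC, hBCM⟩ := h B hB.1 bot_le hBM
  have hCltM : C < M :=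
    lt_of_le_of_ne hCM fun hCeq => hB.2.1 (by rwa [hCeq, inf_eq_left.2 hBM] at hBC)
  have := hC
  obtain ⟨k, A, hA, hAC⟩ := ih C hCltM (h.of_le bot_le hCM)
  have := hB.1
  exact ⟨k + 1, Fin.cons B A, Fin.cases hB hA,
    isInternalDirectProduct_cons (fun i => (hA i).1) hAC hBC hBCM⟩

end MinimalNormal

section PResidual

variable {G : Type} [Group G]

theorem isPGroup_map_mk'_iff {p : ℕ} {K N : Subgroup G} [K.Normal] :
    IsPGroup p (N.map (QuotientGroup.mk' K)) ↔ ∀ x ∈ N, ∃ n : ℕ, x ^ p ^ n ∈ K := by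
  constructor
  · intro h x hx
    obtain ⟨n, hn⟩ := h ⟨_, mem_map_of_mem _ hx⟩
    exact ⟨n, (QuotientGroup.eq_one_iff _).1 (congrArg Subtype.val hn)⟩
  · rintro h ⟨_, x, hx, rfl⟩
    obtain ⟨n, hn⟩ := h x hx
    exact ⟨n, Subtype.ext ((QuotientGroup.eq_one_iff _).2 hn)⟩

theorem quotDirProdMinP_iff [Finite G] {p : ℕ} [Fact p.Prime] {K N : Subgroup G} [K.Normal]
    (hKN : K ≤ N) : QuotDirProdMinP G p N K ‹_› ↔
      (∀ x ∈ N, ∃ n : ℕ, x ^ p ^ n ∈ K) ∧ IsNormalComplemented K N := by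
  have hcompl := isNormalComplemented_ker_iff_bot_map (QuotientGroup.mk'_surjective K)
    (N := N) (by rwa [QuotientGroup.ker_mk'])
  rw [QuotientGroup.ker_mk'] at hcompl
  rw [hcompl, ← isPGroup_map_mk'_iff]
  constructor
  · rintro ⟨k, B, hB, hBN⟩
    have := fun i => (hB i).1.1
    rw [← hBN.2.2.1]
    exact ⟨Sylow.iSup_of_normal B fun i => IsPGroup.of_card (hB i).2.choose_spec,
      isNormalComplemented_bot_iSup fun i => (hB i).1⟩
  · rintro ⟨hP, hC⟩
    obtain ⟨k, B, hB, hBN⟩ := hC.exists_isInternalDirectProduct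
    exact ⟨k, B, fun i => ⟨hB i, (hP.to_le (hBN.1 i)).exists_card_eq⟩, hBN⟩

theorem quotDirProdMinP_inf [Finite G] {p : ℕ} [Fact p.Prime] {K₁ K₂ N : Subgroup G}
    [K₁.Normal] [K₂.Normal] (hK₁N : K₁ ≤ N) (hK₂N : K₂ ≤ N)
    (h₁ : QuotDirProdMinP G p N K₁ ‹_›) (h₂ : QuotDirProdMinP G p N K₂ ‹_›) :
    QuotDirProdMinP G p N (K₁ ⊓ K₂) inferInstance := by
  rw [quotDirProdMinP_iff hK₁N] at h₁
  rw [quotDirProdMinP_iff hK₂N] at h₂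
  refine (quotDirProdMinP_iff (inf_le_left.trans hK₁N)).2
    ⟨fun x hx => ?_, h₁.2.inf h₂.2 hK₁N hK₂N⟩
  obtain ⟨n₁, hn₁⟩ := h₁.1 x hx
  obtain ⟨n₂, hn₂⟩ := h₂.1 x hx
  refine ⟨n₁ + n₂, ?_, ?_⟩
  · rw [pow_add, pow_mul]
    exact pow_mem hn₁ _
  · rw [pow_add, pow_mul']
    exact pow_mem hn₂ _

end PResidual

/-- For a normal subgroup `N` of a finite group `G` and a prime `p`,
among all normal subgroups `K ≤ N` of `G` such that `N/K` is an internal direct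
product of minimal normal `p`-subgroups of `G/K` there is a smallest one,
`Res_p(N,G)`. -/
theorem stmt8 (G : Type) [Group G] [Finite G] (N : Subgroup G) (hN : N.Normal)
    (p : ℕ) (hp : p.Prime) :
    ∃ (R : Subgroup G) (hR : R.Normal), R ≤ N ∧ QuotDirProdMinP G p N R hR ∧
      ∀ (K : Subgroup G) (hK : K.Normal), K ≤ N → QuotDirProdMinP G p N K hK → R ≤ K := by
  have : Fact p.Prime := ⟨hp⟩
  have hNN : QuotDirProdMinP G p N N hN :=
    (quotDirProdMinP_iff le_rfl).2 ⟨fun x hx => ⟨0, by rwa [pow_zero, pow_one]⟩,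
      isNormalComplemented_self hN⟩
  obtain ⟨R, ⟨hR, hRN, hRN'⟩, hmin⟩ :=
    (Set.toFinite {K : Subgroup G | ∃ hK : K.Normal, K ≤ N ∧ QuotDirProdMinP G p N K hK}
      ).exists_minimal ⟨N, hN, le_rfl, hNN⟩
  refine ⟨R, hR, hRN, hRN', fun K hK hKN hKN' => ?_⟩
  have hRK := quotDirProdMinP_inf hRN hKN hRN' hKN'
  exact (le_inf_iff.1 (hmin ⟨_, inf_le_left.trans hRN, hRK⟩ inf_le_left)).2
end

section
/- Let 𝔉 be a non-empty formation, G a finite group, and X a K-𝔉-subnormal subgroup of G. If the normal closure X^G equals G and X·G^𝔉 = G, then X = G. -/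
open scoped commutatorElement

/-! Walk down the K-𝔉-subnormal chain `X = c 0 ≤ ⋯ ≤ c n = G` from the top. If `c (i+1) = G`,
then either `c i` is normal in `G`, so it contains `X^G = G`, or `G / Core_G(c i) ∈ 𝔉`, so
`c i ≥ Core_G(c i) ≥ G^𝔉` and `c i` contains `X ⬝ G^𝔉 = G`. Either way `c i = G`, and at
the bottom `X = G`. -/

theorem Subgroup.normal_of_normal_subgroupOf_top {G : Type*} [Group G] {A : Subgroup G}
    (hA : (A.subgroupOf ⊤).Normal) : A.Normal :=
  normalizer_eq_top_iff.mp <| top_le_iff.mp <|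
    (normal_subgroupOf_iff_le_normalizer le_top).mp hA

theorem Subgroup.map_topEquiv_subgroupOf_top {G : Type*} [Group G] (A : Subgroup G) :
    (A.subgroupOf ⊤).map (topEquiv : (⊤ : Subgroup G) ≃* G).toMonoidHom = A := by
  ext x
  simp [mem_subgroupOf]

theorem IsResidual.le_map_of_mulEquiv {𝔉 : GroupClass} (hform : IsFormation 𝔉)
    {G : Type} [Group G] [Finite G] {R : Subgroup G} (hR : IsResidual 𝔉 G R)
    {H : Type} [Group H] [Finite H] (e : H ≃* G) (K : Subgroup H) [K.Normal]
    (hK : 𝔉 (H ⧸ K)) : R ≤ K.map e.toMonoidHom := by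
  obtain ⟨-, -, hRmin⟩ := hR
  have hnormal : (K.map e.toMonoidHom).Normal := Subgroup.Normal.map ‹_› _ e.surjective
  exact hRmin _ hnormal (hform.iso_closed _ _ (QuotientGroup.congr K _ e rfl) hK)

theorem KFStep.eq_top_of_top {𝔉 : GroupClass} (hform : IsFormation 𝔉)
    {G : Type} [Group G] [Finite G] {X A R : Subgroup G} (hR : IsResidual 𝔉 G R)
    (h1 : Subgroup.normalClosure (X : Set G) = ⊤) (h2 : X ⊔ R = ⊤)
    (hstep : KFStep 𝔉 A ⊤) (hXA : X ≤ A) : A = ⊤ := by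
  obtain ⟨-, hnormal | hF⟩ := hstep
  · have := Subgroup.normal_of_normal_subgroupOf_top hnormal
    rw [eq_top_iff, ← h1]
    exact Subgroup.normalClosure_le_normal hXA
  · have hRA : R ≤ A := calc
      R ≤ ((A.subgroupOf ⊤).normalCore).map Subgroup.topEquiv.toMonoidHom :=
        hR.le_map_of_mulEquiv hform _ _ hF
      _ ≤ (A.subgroupOf ⊤).map Subgroup.topEquiv.toMonoidHom :=
        Subgroup.map_mono (Subgroup.normalCore_le _)
      _ = A := A.map_topEquiv_subgroupOf_top
    rw [eq_top_iff, ← h2]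
    exact sup_le hXA hRA

theorem stmt16_general (𝔉 : GroupClass) (hform : IsFormation 𝔉)
    (G : Type) [Group G] [Finite G] (X : Subgroup G) (hX : IsKFSubnormal 𝔉 G X)
    (R : Subgroup G) (hR : IsResidual 𝔉 G R)
    (h1 : Subgroup.normalClosure (X : Set G) = ⊤) (h2 : X ⊔ R = ⊤) :
    X = ⊤ := by
  obtain ⟨n, c, rfl, hcn, hstep⟩ := hX
  suffices h : ∀ k ≤ n, c 0 ≤ c k → c k = ⊤ from h 0 n.zero_le le_rfl
  intro k hk
  induction hk using Nat.decreasingInduction with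
  | self => exact fun _ => hcn
  | of_succ k hkn ih =>
    intro hXk
    have hstep := hstep k hkn
    rw [ih (hXk.trans hstep.1)] at hstep
    exact hstep.eq_top_of_top hform hR h1 h2 hXk

/-- Let `𝔉` be a non-empty formation, `G` a finite group and `X` a
K-`𝔉`-subnormal subgroup of `G`. If `X^G = G` and `X ⬝ G^𝔉 = G`, then `X = G`. -/
theorem stmt16 (𝔉 : GroupClass) (hform : IsFormation 𝔉) (hne : GroupClassNonempty 𝔉)
    (G : Type) [Group G] [Finite G] (X : Subgroup G) (hX : IsKFSubnormal 𝔉 G X)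
    (R : Subgroup G) (hR : IsResidual 𝔉 G R)
    (h1 : Subgroup.normalClosure (X : Set G) = ⊤) (h2 : X ⊔ R = ⊤) :
    X = ⊤ :=
  stmt16_general 𝔉 hform G X hX R hR h1 h2
end

section
/- Let 𝔉 be a non-empty hereditary formation and H a subgroup of a finite group G. Then H is 𝔉-subnormal in G if and only if H = G, or H·G^𝔉 is a proper subgroup of G and H is 𝔉-subnormal in H·G^𝔉. -/
open scoped commutatorElement

/-! An `𝔉`-subnormal chain from `H` to `G` is a path of `FStep`s, so `IsFSubnormal 𝔉 G H` is
`ReflTransGen (FStep 𝔉) H ⊤`. For `R = G^𝔉` the last step `A < G` of such a path has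
`G / Core_G(A) ∈ 𝔉`, hence `R ≤ A`; so the path runs inside `H R` until it reaches `H R < G`,
and intersecting it with `H R` (which keeps steps in `𝔉` because `𝔉` is hereditary) gives a path
from `H` to `H R` there. Conversely `H R → G` is itself a step, since `G / Core_G(H R)` is a
quotient of `G / R`, and a path from `H` to `H R` inside `H R` is also one inside `G`. -/

theorem Relation.reflTransGen_iff_exists_seq {α : Type*} {r : α → α → Prop} {a b : α} :
    Relation.ReflTransGen r a b ↔
      ∃ (n : ℕ) (c : ℕ → α), c 0 = a ∧ c n = b ∧ ∀ i < n, r (c i) (c (i + 1)) := by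
  constructor
  · intro h
    induction h with
    | refl => exact ⟨0, fun _ => a, rfl, rfl, fun _ h => absurd h (Nat.not_lt_zero _)⟩
    | @tail b d _ hbd ih =>
      obtain ⟨n, c, hc0, hcn, hc⟩ := ih
      refine ⟨n + 1, fun i => if i ≤ n then c i else d, by simpa using hc0, by simp, ?_⟩
      intro i hi
      rcases Nat.lt_or_eq_of_le (Nat.le_of_lt_succ hi) with hi | rfl
      · simpa [hi.le, Nat.succ_le_of_lt hi] using hc i hi
      · simpa [hcn] using hbd
  · rintro ⟨n, c, rfl, rfl, hc⟩
    induction n with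
    | zero => exact .refl
    | succ n ih => exact (ih fun i hi => hc i (by omega)).tail (hc n (by omega))

variable {𝔉 : GroupClass}

namespace IsFormation

theorem of_injective (hform : IsFormation 𝔉) (hhered : IsHereditary 𝔉)
    {X Y : Type} [Group X] [Finite X] [Group Y] [Finite Y]
    (f : X →* Y) (hf : Function.Injective f) (hY : 𝔉 Y) : 𝔉 X :=
  hform.iso_closed _ _ (MonoidHom.ofInjective hf).symm (hhered Y hY f.range)

theorem quotient_of_le (hform : IsFormation 𝔉) {X : Type} [Group X] [Finite X]
    {N M : Subgroup X} [N.Normal] [M.Normal] (h : N ≤ M) (hX : 𝔉 (X ⧸ N)) : 𝔉 (X ⧸ M) :=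
  hform.iso_closed _ _ (QuotientGroup.quotientQuotientEquivQuotient N M h)
    (hform.quot_closed _ _ hX)

theorem quotient_normalCore_of_ker_le (hform : IsFormation 𝔉) (hhered : IsHereditary 𝔉)
    {X Y : Type} [Group X] [Finite X] [Group Y] [Finite Y]
    (φ : X →* Y) (hY : 𝔉 Y) {S : Subgroup X} (hS : φ.ker ≤ S) : 𝔉 (X ⧸ S.normalCore) :=
  hform.quotient_of_le (Subgroup.normal_le_normalCore.mpr hS)
    (hform.of_injective hhered _ (QuotientGroup.kerLift_injective φ) hY)

theorem quotient_normalCore_of_comap_le (hform : IsFormation 𝔉) (hhered : IsHereditary 𝔉)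
    {X Y : Type} [Group X] [Finite X] [Group Y] [Finite Y] (g : X →* Y)
    {S : Subgroup X} {T : Subgroup Y} (hT : 𝔉 (Y ⧸ T.normalCore)) (hS : T.comap g ≤ S) :
    𝔉 (X ⧸ S.normalCore) := by
  refine hform.quotient_normalCore_of_ker_le hhered ((QuotientGroup.mk' _).comp g) hT ?_
  rw [← MonoidHom.comap_ker, QuotientGroup.ker_mk']
  exact (Subgroup.comap_mono T.normalCore_le).trans hS

end IsFormation

section FStep

variable (hform : IsFormation 𝔉) (hhered : IsHereditary 𝔉)
  {G K : Type} [Group G] [Finite G] [Group K] [Finite K]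
include hform hhered

theorem FStep.comap (f : K →* G) {A B : Subgroup G} (h : FStep 𝔉 A B) :
    Relation.ReflTransGen (FStep 𝔉) (A.comap f) (B.comap f) := by
  rcases (Subgroup.comap_mono h.1.le : A.comap f ≤ B.comap f).eq_or_lt with heq | hlt
  · rw [heq]
  exact .single ⟨hlt, hform.quotient_normalCore_of_comap_le hhered (f.subgroupComap B) h.2
    fun _ hx => by exact hx⟩

theorem FStep.map (f : K →* G) (hf : Function.Injective f) {A B : Subgroup K}
    (h : FStep 𝔉 A B) : FStep 𝔉 (A.map f) (B.map f) := by
  refine ⟨(Subgroup.map_lt_map_iff_of_injective hf).mpr h.1, ?_⟩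
  refine hform.quotient_normalCore_of_comap_le hhered
    (B.equivMapOfInjective f hf).symm.toMonoidHom h.2 fun y hyA => ?_
  refine Subgroup.mem_subgroupOf.mpr ⟨_, Subgroup.mem_subgroupOf.mp hyA, ?_⟩
  exact congrArg Subtype.val ((B.equivMapOfInjective f hf).apply_symm_apply y)

end FStep

theorem IsResidual.fStep_top_of_le (hform : IsFormation 𝔉) (hhered : IsHereditary 𝔉)
    {G : Type} [Group G] [Finite G] {R A : Subgroup G}
    (hR : IsResidual 𝔉 G R) (hRA : R ≤ A) (hA : A ≠ ⊤) : FStep 𝔉 A ⊤ := by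
  obtain ⟨hRn, hq, -⟩ := hR
  refine ⟨lt_top_iff_ne_top.mpr hA, hform.quotient_normalCore_of_ker_le hhered
    ((QuotientGroup.mk' R).comp Subgroup.topEquiv.toMonoidHom) hq ?_⟩
  intro x hx
  exact hRA ((QuotientGroup.eq_one_iff _).mp hx)

theorem IsResidual.le_of_fStep_top (hform : IsFormation 𝔉) (hhered : IsHereditary 𝔉)
    {G : Type} [Group G] [Finite G] {R A : Subgroup G}
    (hR : IsResidual 𝔉 G R) (h : FStep 𝔉 A ⊤) : R ≤ A := by
  obtain ⟨-, -, hmin⟩ := hR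
  have hcore : 𝔉 (G ⧸ A.normalCore) := hform.quotient_normalCore_of_comap_le hhered
    Subgroup.topEquiv.symm.toMonoidHom h.2 (fun x hx => by exact hx)
  exact (hmin _ _ hcore).trans A.normalCore_le

theorem le_of_reflTransGen_fStep {G : Type} [Group G] [Finite G] {A B : Subgroup G}
    (h : Relation.ReflTransGen (FStep 𝔉) A B) : A ≤ B := by
  induction h with
  | refl => exact le_rfl
  | tail _ hst ih => exact ih.trans hst.1.le

theorem isFSubnormal_iff_reflTransGen {G : Type} [Group G] [Finite G] {H : Subgroup G} :
    IsFSubnormal 𝔉 G H ↔ Relation.ReflTransGen (FStep 𝔉) H ⊤ := by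
  rw [Relation.reflTransGen_iff_exists_seq, IsFSubnormal, or_iff_right_of_imp]
  rintro rfl
  exact ⟨0, fun _ => ⊤, rfl, rfl, fun _ h => absurd h (Nat.not_lt_zero _)⟩

theorem stmt18_general (𝔉 : GroupClass) (hform : IsFormation 𝔉) (hhered : IsHereditary 𝔉)
    (G : Type) [Group G] [Finite G] (H : Subgroup G)
    (R : Subgroup G) (hR : IsResidual 𝔉 G R) :
    IsFSubnormal 𝔉 G H ↔
      (H = ⊤ ∨
        (H ⊔ R < ⊤ ∧ IsFSubnormal 𝔉 ↥(H ⊔ R) (H.subgroupOf (H ⊔ R)))) := by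
  simp only [isFSubnormal_iff_reflTransGen]
  constructor
  · intro h
    rcases h.cases_tail with rfl | ⟨A, hHA, hA⟩
    · exact Or.inl rfl
    have hHR : H ⊔ R ≤ A :=
      sup_le (le_of_reflTransGen_fStep hHA) (hR.le_of_fStep_top hform hhered hA)
    refine Or.inr ⟨hHR.trans_lt hA.1, ?_⟩
    have hpath : Relation.ReflTransGen (FStep 𝔉) (H.subgroupOf (H ⊔ R))
        ((⊤ : Subgroup G).subgroupOf (H ⊔ R)) :=
      h.lift' _ fun _ _ hst => hst.comap hform hhered (H ⊔ R).subtype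
    rwa [Subgroup.top_subgroupOf] at hpath
  · rintro (rfl | ⟨hlt, hsub⟩)
    · exact .refl
    have hpath := hsub.lift (Subgroup.map (H ⊔ R).subtype) fun _ _ hst =>
      hst.map hform hhered _ (H ⊔ R).subtype_injective
    rw [Function.onFun, Subgroup.subgroupOf_map_subtype, inf_of_le_left le_sup_left,
      ← MonoidHom.range_eq_map, Subgroup.range_subtype] at hpath
    exact hpath.tail (hR.fStep_top_of_le hform hhered le_sup_right hlt.ne)

/-- Let `𝔉` be a non-empty hereditary formation, `G` a finite group
with `𝔉`-residual `R = G^𝔉`, and `H ≤ G`. Then `H` is `𝔉`-subnormal in `G` iff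
`H = G`, or `H⬝G^𝔉 < G` and `H` is `𝔉`-subnormal in `H⬝G^𝔉`. -/
theorem stmt18 (𝔉 : GroupClass) (hform : IsFormation 𝔉) (hhered : IsHereditary 𝔉)
    (hne : GroupClassNonempty 𝔉)
    (G : Type) [Group G] [Finite G] (H : Subgroup G)
    (R : Subgroup G) (hR : IsResidual 𝔉 G R) :
    IsFSubnormal 𝔉 G H ↔
      (H = ⊤ ∨
        (H ⊔ R < ⊤ ∧ IsFSubnormal 𝔉 ↥(H ⊔ R) (H.subgroupOf (H ⊔ R)))) :=
  stmt18_general 𝔉 hform hhered G H R hR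
end
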